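/- Fix n ≥ 1, let σ be the uniform (normalized surface) probability measure on 𝕊^n ⊂ ℝ^{n+1}, and let μ₀ be a Borel probability measure on 𝕊^n absolutely continuous with respect to σ. Let φ : [0,π] → ℝ be measurable with ∫∫ φ(d(x,y))² d(x,y)² dμ₀(y) dμ₀(x) < ∞. Then ∫∫∫ φ(d(x,y)) φ(d(x,z)) ⟨w(x,y), w(x,z)⟩ dμ₀(x) dμ₀(y) dμ₀(z) ≥ 0. -/

import Mathlib

/-!
Put `F(x, y) = φ(d(x, y)) • w(x, y)`. The integrand is `⟪F(x, y), F(x, z)⟫`, and integrating out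
`y` and `z` first turns the triple integral into `∫ ‖∫ F(x, y) dμ₀(y)‖² dμ₀(x) ≥ 0`. Since
`‖w(x, y)‖ ≤ d(x, y)`, the moment hypothesis puts `F` in `L²(μ₀ ⊗ μ₀)`, which justifies Fubini.
-/

open MeasureTheory Finset
open scoped ENNReal RealInnerProductSpace

/-- Geodesic distance on the unit sphere: `d(x,y) = arccos⟨x,y⟩`. -/
noncomputable def sphereDist {n : ℕ} (x y : EuclideanSpace ℝ (Fin (n + 1))) : ℝ :=
  Real.arccos ⟪x, y⟫

open Classical in
/-- The influence vector on the unit sphere: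
`w(x,y) = d(x,y)·(y − ⟨x,y⟩x)/‖y − ⟨x,y⟩x‖` if `y ≠ ±x`, and `0` otherwise. -/
noncomputable def sphereW {n : ℕ} (x y : EuclideanSpace ℝ (Fin (n + 1))) :
    EuclideanSpace ℝ (Fin (n + 1)) :=
  if y = x ∨ y = -x then 0
  else sphereDist x y • (‖y - ⟪x, y⟫ • x‖⁻¹ • (y - ⟪x, y⟫ • x))

section InnerKernel

variable {α β : Type*} [MeasurableSpace α] [MeasurableSpace β] {μ : Measure α} {ν : Measure β}

theorem MeasureTheory.MemLp.ae_memLp_prodMk_left {G : Type*} [NormedAddCommGroup G]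
    [SFinite μ] [SFinite ν] {F : α × β → G} (hF : MemLp F 2 (μ.prod ν)) :
    ∀ᵐ a ∂μ, MemLp (fun b => F (a, b)) 2 ν := by
  have hsq := (memLp_two_iff_integrable_sq_norm hF.1).1 hF
  filter_upwards [hF.1.prodMk_left, hsq.prod_right_ae] with a hmeas hint
  exact (memLp_two_iff_integrable_sq_norm hmeas).2 hint

variable {E : Type*} [NormedAddCommGroup E] [InnerProductSpace ℝ E]

theorem MeasureTheory.MemLp.integrable_inner {f g : α → E} (hf : MemLp f 2 μ)
    (hg : MemLp g 2 μ) : Integrable (fun a => ⟪f a, g a⟫) μ :=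
  memLp_one_iff_integrable.1 <| hf.of_bilin (fun u v => ⟪u, v⟫) 1 hg
    (hf.1.inner hg.1) (ae_of_all _ fun _ => by simpa using nnnorm_inner_le_nnnorm _ _)

theorem integral_prod_inner [CompleteSpace E] [SFinite μ] [SFinite ν] {f : α → E} {g : β → E}
    (hf : Integrable f μ) (hg : Integrable g ν) :
    ∫ p, ⟪f p.1, g p.2⟫ ∂μ.prod ν = ⟪∫ a, f a ∂μ, ∫ b, g b ∂ν⟫ := by
  have hint : Integrable (fun p : α × β => ⟪f p.1, g p.2⟫) (μ.prod ν) :=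
    (hf.norm.mul_prod hg.norm).mono' (hf.1.comp_fst.inner hg.1.comp_snd)
      (ae_of_all _ fun _ => norm_inner_le_norm _ _)
  calc ∫ p, ⟪f p.1, g p.2⟫ ∂μ.prod ν = ∫ a, ⟪f a, ∫ b, g b ∂ν⟫ ∂μ := by
        rw [integral_prod _ hint]
        simp_rw [integral_inner hg]
    _ = ⟪∫ a, f a ∂μ, ∫ b, g b ∂ν⟫ := by
        simp_rw [real_inner_comm (∫ b, g b ∂ν), integral_inner hf]

theorem integrable_prod_prod_inner [SFinite μ] [IsProbabilityMeasure ν] {F : α × β → E}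
    (hF : MemLp F 2 (μ.prod ν)) :
    Integrable (fun p : α × β × β => ⟪F (p.1, p.2.1), F (p.1, p.2.2)⟫) (μ.prod (ν.prod ν)) :=
  MemLp.integrable_inner
    (hF.comp_measurePreserving ((MeasurePreserving.id μ).prod measurePreserving_fst))
    (hF.comp_measurePreserving ((MeasurePreserving.id μ).prod measurePreserving_snd))

theorem integral_prod_prod_inner_eq_integral_norm_sq [CompleteSpace E] [SFinite μ]
    [IsProbabilityMeasure ν] {F : α × β → E} (hF : MemLp F 2 (μ.prod ν)) :
    ∫ p : α × β × β, ⟪F (p.1, p.2.1), F (p.1, p.2.2)⟫ ∂μ.prod (ν.prod ν) =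
      ∫ a, ‖∫ b, F (a, b) ∂ν‖ ^ 2 ∂μ := by
  rw [integral_prod _ (integrable_prod_prod_inner hF)]
  refine integral_congr_ae ?_
  filter_upwards [hF.ae_memLp_prodMk_left] with a ha
  have hint : Integrable (fun b => F (a, b)) ν := ha.integrable one_le_two
  simpa only [real_inner_self_eq_norm_sq] using integral_prod_inner hint hint

end InnerKernel

section Sphere

variable {n : ℕ}

local notation "E" => EuclideanSpace ℝ (Fin (n + 1))

theorem continuous_sphereDist : Continuous fun p : E × E => sphereDist p.1 p.2 :=
  Real.continuous_arccos.comp continuous_inner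

theorem measurable_sphereW : Measurable fun p : E × E => sphereW p.1 p.2 := by
  have hv : Continuous fun p : E × E => p.2 - ⟪p.1, p.2⟫ • p.1 := by fun_prop
  unfold sphereW
  refine Measurable.ite ?_ measurable_const ?_
  · exact ((isClosed_eq continuous_snd continuous_fst).union
      (isClosed_eq continuous_snd continuous_fst.neg)).measurableSet
  · exact continuous_sphereDist.measurable.smul (hv.measurable.norm.inv.smul hv.measurable)

theorem norm_sphereW_le (x y : E) : ‖sphereW x y‖ ≤ sphereDist x y := by
  have hd : 0 ≤ sphereDist x y := Real.arccos_nonneg _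
  unfold sphereW
  split_ifs
  · simpa using hd
  · rw [norm_smul, Real.norm_of_nonneg hd, norm_smul, norm_inv, norm_norm]
    exact mul_le_of_le_one_right hd (inv_mul_le_one_of_le₀ le_rfl (norm_nonneg _))

theorem memLp_two_smul_sphereW {μ : Measure (E × E)} {φ : ℝ → ℝ} (hφ : Measurable φ)
    (hint : Integrable (fun p : E × E => φ (sphereDist p.1 p.2) ^ 2 * sphereDist p.1 p.2 ^ 2) μ) :
    MemLp (fun p : E × E => φ (sphereDist p.1 p.2) • sphereW p.1 p.2) 2 μ := by
  have hmeas :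
      AEStronglyMeasurable (fun p : E × E => φ (sphereDist p.1 p.2) • sphereW p.1 p.2) μ :=
    ((hφ.comp continuous_sphereDist.measurable).smul measurable_sphereW).aestronglyMeasurable
  refine (memLp_two_iff_integrable_sq_norm hmeas).2 <|
    hint.mono' (hmeas.norm.pow 2) (ae_of_all _ fun p => ?_)
  rw [Real.norm_of_nonneg (by positivity), norm_smul, mul_pow, Real.norm_eq_abs, sq_abs]
  gcongr
  exact norm_sphereW_le _ _

end Sphere

theorem sphere_crossTerm_nonneg_general
    (n : ℕ)
    (μ₀ : Measure (EuclideanSpace ℝ (Fin (n + 1)))) [IsProbabilityMeasure μ₀]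
    (φ : ℝ → ℝ) (hφ : Measurable φ)
    (hint : Integrable (fun p : EuclideanSpace ℝ (Fin (n + 1)) ×
        EuclideanSpace ℝ (Fin (n + 1)) =>
      (φ (sphereDist p.1 p.2)) ^ 2 * (sphereDist p.1 p.2) ^ 2) (μ₀.prod μ₀)) :
    0 ≤ ∫ p : EuclideanSpace ℝ (Fin (n + 1)) ×
        (EuclideanSpace ℝ (Fin (n + 1)) × EuclideanSpace ℝ (Fin (n + 1))),
      φ (sphereDist p.1 p.2.1) * φ (sphereDist p.1 p.2.2) *
        ⟪sphereW p.1 p.2.1, sphereW p.1 p.2.2⟫ ∂(μ₀.prod (μ₀.prod μ₀)) := by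
  calc 0 ≤ ∫ x, ‖∫ y, φ (sphereDist x y) • sphereW x y ∂μ₀‖ ^ 2 ∂μ₀ :=
        integral_nonneg fun _ => by positivity
    _ = _ := by
        rw [← integral_prod_prod_inner_eq_integral_norm_sq (memLp_two_smul_sphereW hφ hint)]
        congr 1 with p
        rw [real_inner_smul_left, real_inner_smul_right]
        ring

/-- nonnegativity of the cross term on the sphere for `μ₀` absolutely
continuous with respect to the uniform measure `σ`:
`∫∫∫ φ(d(x,y))φ(d(x,z))⟨w(x,y),w(x,z)⟩ dμ₀(x)dμ₀(y)dμ₀(z) ≥ 0`. -/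
theorem sphere_crossTerm_nonneg
    (n : ℕ) (hn : 1 ≤ n)
    (σ : Measure (EuclideanSpace ℝ (Fin (n + 1)))) [IsProbabilityMeasure σ]
    (hσsphere : σ (Metric.sphere (0 : EuclideanSpace ℝ (Fin (n + 1))) 1)ᶜ = 0)
    (hσinv : ∀ O : EuclideanSpace ℝ (Fin (n + 1)) ≃ₗᵢ[ℝ] EuclideanSpace ℝ (Fin (n + 1)),
      Measure.map O σ = σ)
    (μ₀ : Measure (EuclideanSpace ℝ (Fin (n + 1)))) [IsProbabilityMeasure μ₀]
    (hμ₀ : μ₀ ≪ σ)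
    (φ : ℝ → ℝ) (hφ : Measurable φ)
    (hint : Integrable (fun p : EuclideanSpace ℝ (Fin (n + 1)) ×
        EuclideanSpace ℝ (Fin (n + 1)) =>
      (φ (sphereDist p.1 p.2)) ^ 2 * (sphereDist p.1 p.2) ^ 2) (μ₀.prod μ₀)) :
    0 ≤ ∫ p : EuclideanSpace ℝ (Fin (n + 1)) ×
        (EuclideanSpace ℝ (Fin (n + 1)) × EuclideanSpace ℝ (Fin (n + 1))),
      φ (sphereDist p.1 p.2.1) * φ (sphereDist p.1 p.2.2) *
        ⟪sphereW p.1 p.2.1, sphereW p.1 p.2.2⟫ ∂(μ₀.prod (μ₀.prod μ₀)) :=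
  sphere_crossTerm_nonneg_general n μ₀ φ hφ hint
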